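/- arXiv:2111.10446 — 4 statements merged into one kernel-verified Lean document; each statement's English description precedes it below -/
import Mathlib

section
/- Let A = ⊕_{i≥0} A_i be a nonnegatively graded k-algebra and let a_1, ..., a_n ∈ A be nonzero elements. Let B be the subalgebra generated by a_1, ..., a_n and B_gr the subalgebra generated by their lowest homogeneous components gr(a_1), ..., gr(a_n). If each monomial p in n variables satisfies that p(gr(a_1),...,gr(a_n)) ≠ 0 implies gr(p(a_1,...,a_n)) = p(gr(a_1),...,gr(a_n)), then dim_k B_gr ≤ dim_k B. -/
open scoped DirectSum

/-- The lowest nonzero homogeneous component of an element of a graded algebra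
(`0` if the element is zero). -/
noncomputable def grLowest {k A : Type*} [Field k] [Ring A] [Algebra k A]
    (𝒜 : ℕ → Submodule k A) [GradedAlgebra 𝒜] (a : A) : A := by
  classical
  exact if h : ∃ i, (DirectSum.decompose 𝒜 a i : A) ≠ 0
    then (DirectSum.decompose 𝒜 a (Nat.find h) : A) else 0

/-!
If the lowest components `gr b_i` are linearly independent, so are the `b_i`: in a nontrivial
relation, project to the least degree `d` among the `b_i` that occur; only the `b_i` whose lowest
component sits in degree `d` survive, giving a relation among their `gr b_i`.

`B_gr` is spanned by the nonzero monomials in the `gr a_i`, and by hypothesis each of them is the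
lowest component of the same monomial in the `a_i`, an element of `B`. Lifting a basis of `B_gr`
chosen among these monomials therefore gives a linearly independent family in `B`.
-/

open DirectSum

section GrLowest

variable {k A : Type*} [Field k] [Ring A] [Algebra k A] (𝒜 : ℕ → Submodule k A) [GradedAlgebra 𝒜]

open Classical in
noncomputable def grLowestDeg (b : A) : ℕ :=
  if h : ∃ i, (decompose 𝒜 b i : A) ≠ 0 then Nat.find h else 0

variable {𝒜}

theorem grLowest_eq_proj_grLowestDeg (b : A) :
    grLowest 𝒜 b = GradedAlgebra.proj 𝒜 (grLowestDeg 𝒜 b) b := by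
  classical
  rw [grLowest, grLowestDeg, GradedAlgebra.proj_apply]
  by_cases h : ∃ i, (decompose 𝒜 b i : A) ≠ 0
  · rw [dif_pos h, dif_pos h]
  · rw [dif_neg h, dif_neg h]
    exact (not_not.1 (not_exists.1 h 0)).symm

theorem proj_eq_zero_of_lt_grLowestDeg {b : A} {d : ℕ} (hd : d < grLowestDeg 𝒜 b) :
    GradedAlgebra.proj 𝒜 d b = 0 := by
  classical
  rw [grLowestDeg] at hd
  split_ifs at hd with h
  · simpa using Nat.find_min h hd
  · exact absurd hd (Nat.not_lt_zero d)

theorem proj_of_le_grLowestDeg {b : A} {d : ℕ} (hd : d ≤ grLowestDeg 𝒜 b) :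
    GradedAlgebra.proj 𝒜 d b = if grLowestDeg 𝒜 b = d then grLowest 𝒜 b else 0 := by
  split_ifs with h
  · rw [grLowest_eq_proj_grLowestDeg, h]
  · exact proj_eq_zero_of_lt_grLowestDeg (lt_of_le_of_ne hd (Ne.symm h))

theorem LinearIndependent.of_grLowest {ι : Type*} {b : ι → A}
    (H : LinearIndependent k fun i => grLowest 𝒜 (b i)) : LinearIndependent k b := by
  classical
  rw [linearIndependent_iff'] at H ⊢
  intro s c hsum
  by_contra! hne
  obtain ⟨j, hjs, hcj⟩ := hne
  obtain ⟨i₀, hi₀, hmin⟩ := (s.filter (c · ≠ 0)).exists_min_image (fun i => grLowestDeg 𝒜 (b i))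
    ⟨j, Finset.mem_filter.2 ⟨hjs, hcj⟩⟩
  rw [Finset.mem_filter] at hi₀
  set d := grLowestDeg 𝒜 (b i₀)
  have hproj : ∑ i ∈ s, c i • GradedAlgebra.proj 𝒜 d (b i) = 0 := by
    simpa [map_sum, map_smul] using congrArg (GradedAlgebra.proj 𝒜 d) hsum
  have hterm : ∀ i ∈ s, c i • GradedAlgebra.proj 𝒜 d (b i) =
      if grLowestDeg 𝒜 (b i) = d then c i • grLowest 𝒜 (b i) else 0 := by
    intro i hi
    by_cases hci : c i = 0
    · simp [hci]
    · rw [proj_of_le_grLowestDeg (hmin i (Finset.mem_filter.2 ⟨hi, hci⟩))]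
      split_ifs <;> simp
  rw [Finset.sum_congr rfl hterm, ← Finset.sum_filter] at hproj
  exact hi₀.2 (H _ c hproj i₀ (Finset.mem_filter.2 ⟨hi₀.1, rfl⟩))

theorem rank_span_le_of_forall_grLowest {S : Set A} {W : Submodule k A}
    (h : ∀ t ∈ S, t ≠ 0 → ∃ b ∈ W, grLowest 𝒜 b = t) :
    Module.rank k (Submodule.span k S) ≤ Module.rank k W := by
  obtain ⟨B, hBS, hspan, hli⟩ := exists_linearIndependent k S
  choose lift hlift_mem hlift using fun t : B => h t (hBS t.2) (hli.ne_zero t)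
  have hli' : LinearIndependent k fun t : B => (⟨lift t, hlift_mem t⟩ : W) := by
    refine LinearIndependent.of_comp W.subtype (LinearIndependent.of_grLowest (𝒜 := 𝒜) ?_)
    simpa [hlift] using hli
  rw [← hspan, rank_span_set hli]
  exact hli'.cardinal_le_rank
end GrLowest

theorem rank_adjoin_grLowest_le_general {k A : Type*} [Field k] [Ring A] [Algebra k A]
    (𝒜 : ℕ → Submodule k A) [GradedAlgebra 𝒜] (n : ℕ) (a : Fin n → A)
    (hmono : ∀ w : List (Fin n),
      (w.map fun i => grLowest 𝒜 (a i)).prod ≠ 0 →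
        grLowest 𝒜 ((w.map a).prod) = (w.map fun i => grLowest 𝒜 (a i)).prod) :
    Module.rank k (Algebra.adjoin k (Set.range fun i => grLowest 𝒜 (a i)))
      ≤ Module.rank k (Algebra.adjoin k (Set.range a)) := by
  rw [← Subalgebra.rank_toSubmodule, Algebra.adjoin_eq_span, ← Subalgebra.rank_toSubmodule]
  refine rank_span_le_of_forall_grLowest (𝒜 := 𝒜) fun t ht ht0 => ?_
  rw [← FreeMonoid.mrange_lift] at ht
  obtain ⟨w, rfl⟩ := ht
  rw [FreeMonoid.lift_apply] at ht0 ⊢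
  refine ⟨(w.toList.map a).prod, ?_, hmono _ ht0⟩
  exact Subalgebra.list_prod_mem _ fun x hx => by
    obtain ⟨i, -, rfl⟩ := List.mem_map.1 hx
    exact Algebra.subset_adjoin ⟨i, rfl⟩

/-- Let `A` be a nonnegatively graded `k`-algebra, `a_1, …, a_n` nonzero
elements, `B` the subalgebra generated by the `a_i`, and `B_gr` the subalgebra
generated by the lowest homogeneous components `gr(a_i)`. If every
(noncommutative) monomial `p` in `n` variables satisfies
`p(gr a_1, …, gr a_n) ≠ 0 → gr (p (a_1, …, a_n)) = p (gr a_1, …, gr a_n)`,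
then `dim_k B_gr ≤ dim_k B`. -/
theorem rank_adjoin_grLowest_le {k A : Type*} [Field k] [Ring A] [Algebra k A]
    (𝒜 : ℕ → Submodule k A) [GradedAlgebra 𝒜] (n : ℕ) (a : Fin n → A)
    (ha : ∀ i, a i ≠ 0)
    (hmono : ∀ w : List (Fin n),
      (w.map fun i => grLowest 𝒜 (a i)).prod ≠ 0 →
        grLowest 𝒜 ((w.map a).prod) = (w.map fun i => grLowest 𝒜 (a i)).prod) :
    Module.rank k (Algebra.adjoin k (Set.range fun i => grLowest 𝒜 (a i)))
      ≤ Module.rank k (Algebra.adjoin k (Set.range a)) :=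
  rank_adjoin_grLowest_le_general 𝒜 n a hmono
end

section
/- Every monomial P in a product set F^a · F_s^b (a product of a fair and b strongly fair monomials) admits a decomposition P = P_1 ··· P_{a+b} where P_1,...,P_a are fair, P_{a+1},...,P_{a+b} are strongly fair, and consecutive factors do not overlap: ord P_i ≤ lord P_{i+1} for all 1 ≤ i < a+b. -/
/-- A monomial `x^{(h_0)}⋯x^{(h_ℓ)}` in `k[x,x',x'',…]`, encoded as the
multiset of orders `{h_0, …, h_ℓ}`, is *fair* if its lowest order is at least
its degree minus 1 (vacuously true for the empty multiset, i.e. `1`). -/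
def IsFair (P : Multiset ℕ) : Prop := ∀ x ∈ P, Multiset.card P - 1 ≤ x

/-- A monomial is *strongly fair* if its lowest order is at least its degree. -/
def IsStronglyFair (P : Multiset ℕ) : Prop := ∀ x ∈ P, Multiset.card P ≤ x

/-!
Say `M` has slack `ε` (`IsFairUpTo ε M`) if `deg M ≤ lord M + ε`: fair is slack `1`, strongly
fair is slack `0`. The basic move merges two factors `A`, `B` of slacks `εA ≥ εB`: cut the
sorted orders of `AB` after its first `lord(AB) + εA` entries. The lower part has slack `εA`
trivially, and a counting argument shows the upper part has slack `εB` and lowest order at least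
`lord B`. Pushing the factor of least slack through all the others with this move makes it lie
above all of them, and induction on the number of factors finishes the proof.
-/

def IsFairUpTo (ε : ℕ) (M : Multiset ℕ) : Prop := ∀ x ∈ M, Multiset.card M ≤ x + ε

def Precedes (M N : Multiset ℕ) : Prop := ∀ x ∈ M, ∀ y ∈ N, x ≤ y

theorem isFairUpTo_one_iff {M : Multiset ℕ} : IsFairUpTo 1 M ↔ IsFair M :=
  forall₂_congr fun _ _ => by omega

theorem isFairUpTo_zero_iff {M : Multiset ℕ} : IsFairUpTo 0 M ↔ IsStronglyFair M := Iff.rfl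

theorem precedes_sum_iff {n : ℕ} {M : Fin n → Multiset ℕ} {N : Multiset ℕ} :
    Precedes (∑ i, M i) N ↔ ∀ i, Precedes (M i) N := by
  simp only [Precedes, Multiset.mem_sum, Finset.mem_univ, true_and]
  grind

theorem Precedes.add_left {M M' N : Multiset ℕ} (h : Precedes M N) (h' : Precedes M' N) :
    Precedes (M + M') N := by
  intro x hx
  rcases Multiset.mem_add.mp hx with hx | hx
  exacts [h x hx, h' x hx]

theorem List.Pairwise.lt_length_filter_le_of_mem_drop {α : Type*} [LinearOrder α] {l : List α}
    (hl : l.Pairwise (· ≤ ·)) {k : ℕ} {y : α} (hy : y ∈ l.drop k) :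
    k < (l.filter (· ≤ y)).length := by
  rw [← List.take_append_drop k l, List.pairwise_append] at hl
  have hk : k < l.length := by
    by_contra! h
    simp [List.drop_eq_nil_of_le h] at hy
  have htake : (l.take k).filter (· ≤ y) = l.take k :=
    List.filter_eq_self.mpr fun x hx => decide_eq_true (hl.2.2 x hx y hy)
  have hdrop : 0 < ((l.drop k).filter (· ≤ y)).length :=
    List.length_pos_of_mem (List.mem_filter.mpr ⟨hy, decide_eq_true le_rfl⟩)
  rw [← List.take_append_drop k l, List.filter_append, List.length_append, htake,
    List.length_take_of_le hk.le]
  omega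

/-- Here `p = lord(AB)`. If `p ∈ A` then `deg A ≤ p + εA`, so some order `≤ y` lies in `B`;
if `p ∈ B` then `deg B ≤ p + εB ≤ p + εA`, so some order `≤ y` lies in `A`. -/
theorem card_add_le_and_exists_le_of_lt_card_filter {εA εB : ℕ} (hε : εB ≤ εA)
    {A B : Multiset ℕ} (hA : IsFairUpTo εA A) (hB : IsFairUpTo εB B)
    {p : ℕ} (hp : p ∈ A + B) (hp_le : ∀ x ∈ A + B, p ≤ x) {y : ℕ}
    (hy : p + εA < Multiset.card ((A + B).filter (· ≤ y))) :
    Multiset.card A + Multiset.card B ≤ p + εA + y + εB ∧ ∃ z ∈ B, z ≤ y := by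
  have hcard : Multiset.card ((A + B).filter (· ≤ y)) =
      Multiset.card (A.filter (· ≤ y)) + Multiset.card (B.filter (· ≤ y)) := by
    rw [Multiset.filter_add, Multiset.card_add]
  have hAf := Multiset.card_le_card (Multiset.filter_le (· ≤ y) A)
  have hBf := Multiset.card_le_card (Multiset.filter_le (· ≤ y) B)
  rcases Multiset.mem_add.mp hp with hpA | hpB
  · have hcardA := hA p hpA
    obtain ⟨z, hzB, hzy⟩ : ∃ z ∈ B, z ≤ y := by
      by_contra! h
      have hB0 : B.filter (· ≤ y) = 0 :=
        Multiset.filter_eq_nil.mpr fun z hz => (h z hz).not_ge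
      rw [hB0, Multiset.card_zero] at hcard
      omega
    have := hB z hzB
    exact ⟨by omega, z, hzB, hzy⟩
  · have hcardB := hB p hpB
    have hcardA : Multiset.card A ≤ y + εA := by
      by_contra! h
      have hA0 : A.filter (· ≤ y) = 0 :=
        Multiset.filter_eq_nil.mpr fun x hx => by have := hA x hx; omega
      rw [hA0, Multiset.card_zero] at hcard
      omega
    obtain ⟨x, hx⟩ := Multiset.card_pos_iff_exists_mem.mp (Nat.zero_lt_of_lt hy)
    obtain ⟨hxAB, hxy⟩ := Multiset.mem_filter.mp hx
    exact ⟨by omega, p, hpB, (hp_le x hxAB).trans hxy⟩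

theorem exists_precedes_rearrangement {εA εB : ℕ} (hε : εB ≤ εA) {A B : Multiset ℕ}
    (hA : IsFairUpTo εA A) (hB : IsFairUpTo εB B) :
    ∃ A' B', A' + B' = A + B ∧ IsFairUpTo εA A' ∧ IsFairUpTo εB B' ∧ Precedes A' B' ∧
      ∀ C, Precedes C B → Precedes C B' := by
  rcases eq_or_ne (A + B) 0 with hAB | hAB
  · obtain ⟨rfl, rfl⟩ := add_eq_zero.mp hAB
    exact ⟨0, 0, rfl, hA, hB, by simp [Precedes], fun _ h => h⟩
  obtain ⟨p, hp, hp_le⟩ : ∃ p ∈ A + B, ∀ x ∈ A + B, p ≤ x :=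
    Multiset.exists_min_image id hAB
  set l := (A + B).sort (· ≤ ·)
  have hl : l.Pairwise (· ≤ ·) := Multiset.pairwise_sort _ _
  have hlAB : (l : Multiset ℕ) = A + B := Multiset.sort_eq _ _
  set k := p + εA with hk
  have hmem {x : ℕ} (hx : x ∈ l) : x ∈ A + B := hlAB ▸ Multiset.mem_coe.mpr hx
  have hupper {y : ℕ} (hy : y ∈ l.drop k) :=
    card_add_le_and_exists_le_of_lt_card_filter hε hA hB hp hp_le <| by
      rw [← hlAB, Multiset.filter_coe, Multiset.coe_card]
      exact hl.lt_length_filter_le_of_mem_drop hy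
  refine ⟨l.take k, l.drop k, ?_, ?_, ?_, ?_, ?_⟩
  · rw [Multiset.coe_add, List.take_append_drop, hlAB]
  · intro x hx
    have := hp_le x (hmem (List.mem_of_mem_take hx))
    simp only [Multiset.coe_card, List.length_take]
    omega
  · intro y hy
    have hcard : l.length = Multiset.card A + Multiset.card B := by
      rw [← Multiset.coe_card, hlAB, Multiset.card_add]
    have := (hupper hy).1
    simp only [Multiset.coe_card, List.length_drop]
    omega
  · rw [← List.take_append_drop k l, List.pairwise_append] at hl
    exact hl.2.2
  · intro C hC x hx y hy
    obtain ⟨z, hzB, hzy⟩ := (hupper hy).2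
    exact (hC x hx z hzB).trans hzy

theorem exists_sum_precedes_rearrangement {e : ℕ} {B : Multiset ℕ} (hB : IsFairUpTo e B)
    {n : ℕ} {ε : Fin n → ℕ} (he : ∀ i, e ≤ ε i) {M : Fin n → Multiset ℕ}
    (hM : ∀ i, IsFairUpTo (ε i) (M i)) :
    ∃ (M' : Fin n → Multiset ℕ) (T : Multiset ℕ), ∑ i, M' i + T = ∑ i, M i + B ∧
      (∀ i, IsFairUpTo (ε i) (M' i)) ∧ IsFairUpTo e T ∧ Precedes (∑ i, M' i) T := by
  induction n generalizing B with
  | zero => exact ⟨M, B, rfl, hM, hB, by simp [Precedes]⟩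
  | succ n ih =>
    obtain ⟨M', T₀, hsum, hM', hT₀, hprec⟩ := ih hB (fun i => he i.succ) fun i => hM i.succ
    obtain ⟨A, T, hAT, hA, hT, hAT_prec, hT_prec⟩ :=
      exists_precedes_rearrangement (he 0) (hM 0) hT₀
    refine ⟨Fin.cons A M', T, ?_, Fin.cases hA hM', hT, ?_⟩
    · simp only [Fin.sum_univ_succ, Fin.cons_zero, Fin.cons_succ]
      rw [add_right_comm, hAT, add_right_comm, add_assoc, hsum, add_assoc]
    · simp only [Fin.sum_univ_succ, Fin.cons_zero, Fin.cons_succ]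
      exact hAT_prec.add_left (hT_prec _ hprec)

theorem exists_chain_rearrangement {n : ℕ} {ε : Fin n → ℕ} (hε : Antitone ε)
    {M : Fin n → Multiset ℕ} (hM : ∀ i, IsFairUpTo (ε i) (M i)) :
    ∃ Q : Fin n → Multiset ℕ, ∑ i, Q i = ∑ i, M i ∧ (∀ i, IsFairUpTo (ε i) (Q i)) ∧
      ∀ (i : ℕ) (h1 : i < n) (h2 : i + 1 < n),
        Precedes (Q ⟨i, h1⟩) (Q ⟨i + 1, h2⟩) := by
  induction n with
  | zero => exact ⟨M, rfl, hM, fun _ h => absurd h (Nat.not_lt_zero _)⟩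
  | succ n ih =>
    obtain ⟨M', T, hsum, hM', hT, hprec⟩ := exists_sum_precedes_rearrangement (hM (Fin.last n))
      (fun i => hε (Fin.le_last i.castSucc)) (fun i => hM i.castSucc)
    obtain ⟨Q, hQsum, hQ, hchain⟩ :=
      ih (hε.comp_monotone Fin.strictMono_castSucc.monotone) hM'
    let R : Fin (n + 1) → Multiset ℕ := Fin.snoc Q T
    have hR_castSucc (j : Fin n) : R j.castSucc = Q j := Fin.snoc_castSucc ..
    have hR_last : R (Fin.last n) = T := Fin.snoc_last ..
    refine ⟨R, ?_, Fin.lastCases (hR_last ▸ hT) fun j => hR_castSucc j ▸ hQ j, ?_⟩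
    · rw [Fin.sum_univ_castSucc, Fin.sum_univ_castSucc, hR_last, ← hsum]
      simp only [hR_castSucc, hQsum]
    · intro i h1 h2
      rcases Nat.lt_succ_iff_lt_or_eq.mp h2 with h2 | rfl
      · exact hR_castSucc ⟨i, by omega⟩ ▸ hR_castSucc ⟨i + 1, h2⟩ ▸
          hchain i (by omega) h2
      · exact hR_castSucc ⟨i, i.lt_succ_self⟩ ▸ hR_last ▸
          precedes_sum_iff.mp (hQsum ▸ hprec) _

/-- Every monomial `P` in `F^a · F_s^b` (a product of `a` fair and `b` strongly
fair monomials) decomposes as `P = P_1 ⋯ P_{a+b}` where `P_1,…,P_a` are fair,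
`P_{a+1},…,P_{a+b}` are strongly fair, and consecutive factors do not overlap:
`ord P_i ≤ lord P_{i+1}`. -/
theorem fair_decomposition_nonoverlapping (a b : ℕ) (P : Multiset ℕ)
    (f : Fin a → Multiset ℕ) (g : Fin b → Multiset ℕ)
    (hf : ∀ i, IsFair (f i)) (hg : ∀ i, IsStronglyFair (g i))
    (hP : P = ∑ i, f i + ∑ i, g i) :
    ∃ Q : Fin (a + b) → Multiset ℕ,
      P = ∑ i, Q i ∧
      (∀ i : Fin (a + b), i.val < a → IsFair (Q i)) ∧
      (∀ i : Fin (a + b), a ≤ i.val → IsStronglyFair (Q i)) ∧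
      (∀ (i : ℕ) (h1 : i < a + b) (h2 : i + 1 < a + b),
        ∀ x ∈ Q ⟨i, h1⟩, ∀ y ∈ Q ⟨i + 1, h2⟩, x ≤ y) := by
  set ε : Fin (a + b) → ℕ := fun i => if (i : ℕ) < a then 1 else 0 with hε
  have hε_anti : Antitone ε := fun i j hij => by
    simp only [hε]
    split_ifs <;> omega
  have hfair : ∀ i, IsFairUpTo (ε i) (Fin.append f g i) := Fin.addCases
    (fun i => by simpa [hε, isFairUpTo_one_iff] using hf i)
    (fun i => by simpa [hε, isFairUpTo_zero_iff] using hg i)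
  obtain ⟨Q, hQsum, hQ, hchain⟩ := exists_chain_rearrangement hε_anti hfair
  refine ⟨Q, by simp [hQsum, Fin.sum_univ_add, hP], fun i hi => ?_, fun i hi => ?_, hchain⟩
  · simpa [hε, hi, isFairUpTo_one_iff] using hQ i
  · simpa [hε, hi.not_gt, isFairUpTo_zero_iff] using hQ i
end

section
/- If Q = Q_1·Q_2 where Q_1 is a strongly fair monomial, Q_2 is a fair monomial, and ord Q_1 ≤ lord Q_2, then there exist a strongly fair monomial Q̃_2 and a fair monomial Q̃_1 with Q = Q̃_1·Q̃_2 and ord Q̃_1 ≤ lord Q̃_2. -/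
/-- If `Q = Q₁·Q₂` with `Q₁` strongly fair, `Q₂` fair and `ord Q₁ ≤ lord Q₂`,
then `Q` can be rewritten as `Q = Q̃₁·Q̃₂` with `Q̃₁` fair, `Q̃₂` strongly fair
and `ord Q̃₁ ≤ lord Q̃₂`. -/
theorem swap_strongly_fair_fair (Q₁ Q₂ : Multiset ℕ)
    (h₁ : IsStronglyFair Q₁) (h₂ : IsFair Q₂)
    (hno : ∀ x ∈ Q₁, ∀ y ∈ Q₂, x ≤ y) :
    ∃ R₁ R₂ : Multiset ℕ, IsFair R₁ ∧ IsStronglyFair R₂ ∧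
      Q₁ + Q₂ = R₁ + R₂ ∧ ∀ x ∈ R₁, ∀ y ∈ R₂, x ≤ y := by
  rcases eq_or_ne Q₂ 0 with h0 | h0
  · refine ⟨Q₁, 0, fun x hx => ?_, fun x hx => absurd hx (by simp), by simp [h0], by simp⟩
    exact le_trans (Nat.sub_le _ _) (h₁ x hx)
  · obtain ⟨m, hm', hmin'⟩ := Q₂.toFinset.exists_min_image id (by
      simpa [Multiset.toFinset_nonempty] using h0)
    have hm : m ∈ Q₂ := Multiset.mem_toFinset.mp hm'
    have hmin : ∀ y ∈ Q₂, m ≤ y := fun y hy => hmin' y (Multiset.mem_toFinset.mpr hy)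
    refine ⟨Q₁ + {m}, Q₂.erase m, ?_, ?_, ?_, ?_⟩
    · intro x hx
      simp only [Multiset.mem_add, Multiset.mem_singleton] at hx
      rw [Multiset.card_add, Multiset.card_singleton, Nat.add_sub_cancel]
      rcases hx with hx | rfl
      · exact h₁ x hx
      · rcases Multiset.empty_or_exists_mem Q₁ with h | ⟨a, ha⟩
        · simp [h]
        · exact le_trans (h₁ a ha) (hno a ha x hm)
    · intro y hy
      rw [Multiset.card_erase_of_mem hm]
      have := h₂ y (Multiset.mem_of_mem_erase hy)
      simp only [Nat.pred_eq_sub_one]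
      omega
    · rw [add_assoc, Multiset.singleton_add, Multiset.cons_erase hm]
    · intro x hx y hy
      simp only [Multiset.mem_add, Multiset.mem_singleton] at hx
      have hy' := Multiset.mem_of_mem_erase hy
      rcases hx with hx | rfl
      · exact hno x hx y hy'
      · exact hmin y hy'
end

section
/- Let P = x^{(h_0)}···x^{(h_ℓ)} with ℓ ≤ h_0 ≤ ... ≤ h_ℓ be a fair monomial and define B(P) = (η^{(h_0−ℓ)} ∧ η^{(h_1−(ℓ−1))} ∧ ... ∧ η^{(h_ℓ)}) ⊗ (ξ^{(ℓ)} ∧ ξ^{(ℓ−1)} ∧ ... ∧ ξ) in the tensor product of two exterior algebras. Then B(P) appears with coefficient (up to sign) ∏ of positive integers, in particular nonzero, in φ(P), where φ is the differential homomorphism with φ(x) = η ⊗ ξ. -/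
/-!
Expanding `φ(P) = ∏ᵢ ∑_{a ≤ hᵢ} C(hᵢ, a) η^{(a)} ⊗ ξ^{(hᵢ-a)}` writes `φ(P)` as a sum over tuples
`a` of products of binomial coefficients times `±(η^{(a₀)} ∧ ⋯) ⊗ (ξ^{(h₀-a₀)} ∧ ⋯)`, each of
which is a signed basis monomial or zero. All tuples landing on `B(P)` contribute the same
element: if `a = a⁰ ∘ π` and `h - a = b⁰ ∘ τ` for permutations `π`, `τ`, where
`a⁰ i = hᵢ - (ℓ - i)` and `b⁰ i = ℓ - i`, then `h ∘ π + π = h + τ`, and for monotone `h` the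
rearrangement inequality forces `τ = π`. So the commuting factors `η^{(aᵢ)} ⊗ ξ^{(bᵢ)}` are only
permuted, and the coefficient of `B(P)` is `±` a nonempty sum of positive products of binomial
coefficients.
-/

open MvPolynomial
open scoped TensorProduct

/-- `Λ = Λ_k(η^{(∞)}) ⊗ Λ_k(ξ^{(∞)})`: the (graded, Koszul-signed) tensor
product of two exterior algebras on countably many generators
`η^{(0)}, η^{(1)}, …` and `ξ^{(0)}, ξ^{(1)}, …`. -/
abbrev LamTensor (k : Type*) [Field k] :=
  GradedTensorProduct k (fun i : ℕ => ⋀[k]^i (ℕ →₀ k)) (fun i : ℕ => ⋀[k]^i (ℕ →₀ k))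

/-- The generator `η^{(i)} ⊗ ξ^{(j)}` of `Λ`. -/
noncomputable def etaXi (k : Type*) [Field k] (i j : ℕ) : LamTensor k :=
  (ExteriorAlgebra.ι k (Finsupp.single i (1 : k))) ᵍ⊗ₜ[k]
    (ExteriorAlgebra.ι k (Finsupp.single j (1 : k)))

/-- The basis monomial `(η^{(s_1)} ∧ … ∧ η^{(s_p)}) ⊗ (ξ^{(t_1)} ∧ … ∧ ξ^{(t_q)})`
of `Λ` indexed by a pair of finite sets of orders (wedged in increasing order). -/
noncomputable def basisMon (k : Type*) [Field k] (S T : Finset ℕ) : LamTensor k :=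
  (((S.sort (· ≤ ·)).map fun i => ExteriorAlgebra.ι k (Finsupp.single i (1 : k))).prod)
    ᵍ⊗ₜ[k]
  (((T.sort (· ≤ ·)).map fun i => ExteriorAlgebra.ι k (Finsupp.single i (1 : k))).prod)

theorem Equiv.Perm.exists_eq_comp_of_image_eq {α : Type*} [DecidableEq α] {n : ℕ}
    {u v : Fin n → α} (hv : Function.Injective v)
    (huv : Finset.univ.image u = Finset.univ.image v) :
    ∃ σ : Equiv.Perm (Fin n), u = v ∘ σ := by
  have hu : Function.Injective u := by
    rw [← Set.injOn_univ, ← Finset.coe_univ, ← Finset.card_image_iff, huv,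
      Finset.card_image_of_injective _ hv]
  have hr : Set.range u = Set.range v := by
    simpa only [Finset.coe_image, Finset.coe_univ, Set.image_univ] using
      congrArg (fun s : Finset α => (s : Set α)) huv
  refine ⟨(Equiv.ofInjective u hu).trans ((Equiv.setCongr hr).trans
    (Equiv.ofInjective v hv).symm), funext fun i => ?_⟩
  simp [Equiv.apply_ofInjective_symm hv]

theorem Equiv.Perm.eq_of_comp_add_val_eq {n : ℕ} {h : Fin n → ℕ} (hh : Monotone h)
    {π τ : Equiv.Perm (Fin n)} (heq : ∀ i, h (π i) + π i = h i + τ i) : τ = π := by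
  have hd : ∀ i, (h i : ℤ) - h (π i) = (π i : ℤ) - τ i := fun i => by linarith [heq i]
  have hsq : ∑ i, ((π i : ℤ) - τ i) ^ 2 = 2 * ∑ i, (π i : ℤ) * (h i - h (π i)) := by
    have hτ : ∑ i, ((τ i : ℕ) : ℤ) ^ 2 = ∑ i, ((π i : ℕ) : ℤ) ^ 2 := by
      rw [Equiv.sum_comp τ fun i => ((i : ℕ) : ℤ) ^ 2, Equiv.sum_comp π fun i => ((i : ℕ) : ℤ) ^ 2]
    simp only [hd, Finset.mul_sum]
    rw [← sub_eq_zero, ← Finset.sum_sub_distrib, ← sub_eq_zero.mpr hτ, ← Finset.sum_sub_distrib]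
    exact Finset.sum_congr rfl fun i _ => by ring
  have hrearr : ∑ i, (π i : ℤ) * (h i - h (π i)) ≤ 0 := by
    have hmv : Monovary (fun i : Fin n => ((i : ℕ) : ℤ)) fun i => (h i : ℤ) :=
      (Nat.mono_cast.comp Fin.val_strictMono.monotone).monovary (Nat.mono_cast.comp hh)
    have := hmv.sum_comp_perm_smul_le_sum_smul (σ := π)
    rw [← Equiv.sum_comp π fun i => ((i : ℕ) : ℤ) • (h i : ℤ)] at this
    simpa only [mul_sub, Finset.sum_sub_distrib, smul_eq_mul, sub_nonpos] using this
  have hzero := (Finset.sum_eq_zero_iff_of_nonneg fun i _ => sq_nonneg ((π i : ℤ) - τ i)).mp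
    (le_antisymm (by linarith) (Finset.sum_nonneg fun i _ => sq_nonneg _))
  ext i
  have := hzero i (Finset.mem_univ i)
  simp only [pow_eq_zero_iff two_ne_zero (M₀ := ℤ), sub_eq_zero] at this
  exact_mod_cast this.symm

theorem List.prod_ofFn_sum {R α : Type*} [NonAssocSemiring R] {n : ℕ} (s : Fin n → Finset α)
    (f : Fin n → α → R) :
    (List.ofFn fun i => ∑ a ∈ s i, f i a).prod =
      ∑ a ∈ Fintype.piFinset s, (List.ofFn fun i => f i (a i)).prod := by
  induction n with
  | zero => simp
  | succ n ih =>
    rw [List.ofFn_succ, List.prod_cons, ih, Finset.sum_mul_sum, ← Finset.sum_product']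
    refine Finset.sum_nbij' (fun p => Fin.cons p.1 p.2) (fun a => (a 0, Fin.tail a))
      ?_ ?_ (fun _ _ => rfl) (fun a _ => Fin.cons_self_tail a) ?_
    · rintro ⟨a₀, a⟩ hp
      simpa only [Finset.mem_coe, Finset.mem_product, Fintype.mem_piFinset, Fin.forall_fin_succ,
        Fin.cons_zero, Fin.cons_succ] using hp
    · intro a ha
      simpa only [Finset.mem_coe, Finset.mem_product, Fintype.mem_piFinset, Fin.forall_fin_succ,
        Fin.tail] using ha
    · rintro ⟨a₀, a⟩ -
      simp [List.ofFn_succ]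

theorem List.prod_ofFn_nsmul {R : Type*} [Semiring R] {n : ℕ} (c : Fin n → ℕ) (x : Fin n → R) :
    (List.ofFn fun i => c i • x i).prod = (∏ i, c i) • (List.ofFn x).prod := by
  induction n with
  | zero => simp
  | succ n ih =>
    rw [List.ofFn_succ, List.prod_cons, ih, List.ofFn_succ, List.prod_cons, Fin.prod_univ_succ,
      smul_mul_smul_comm, mul_comm]

theorem Fin.image_univ_sub_val (ℓ : ℕ) :
    Finset.univ.image (fun i : Fin (ℓ + 1) => ℓ - (i : ℕ)) = Finset.range (ℓ + 1) := by
  ext j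
  simp only [Finset.mem_image, Finset.mem_univ, true_and, Finset.mem_range]
  exact ⟨fun ⟨i, hi⟩ => by omega, fun hj => ⟨⟨ℓ - j, by omega⟩, by simp only; omega⟩⟩

open ExteriorAlgebra

section Wedge

variable (k : Type*) [Field k]

noncomputable def wedge {n : ℕ} (v : Fin n → ℕ) : ExteriorAlgebra k (ℕ →₀ k) :=
  (List.ofFn fun i => ι k (Finsupp.single (v i) (1 : k))).prod

variable {k}

theorem wedge_eq_ιMulti {n : ℕ} (v : Fin n → ℕ) :
    wedge k v = ιMulti k n fun i => Finsupp.single (v i) (1 : k) :=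
  (ιMulti_apply _).symm

theorem wedge_mem_exteriorPower {n : ℕ} (v : Fin n → ℕ) : wedge k v ∈ ⋀[k]^n (ℕ →₀ k) := by
  rw [wedge_eq_ιMulti]
  exact ιMulti_range k n ⟨_, rfl⟩

theorem wedge_comp_perm {n : ℕ} (v : Fin n → ℕ) (σ : Equiv.Perm (Fin n)) :
    wedge k (v ∘ σ) = Equiv.Perm.sign σ • wedge k v := by
  simp only [wedge_eq_ιMulti]
  exact (ιMulti k n).map_perm (fun i => Finsupp.single (v i) (1 : k)) σ

theorem wedge_eq_zero_of_not_injective {n : ℕ} {v : Fin n → ℕ} (hv : ¬Function.Injective v) :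
    wedge k v = 0 := by
  obtain ⟨i, j, hij, hne⟩ := Function.not_injective_iff.mp hv
  rw [wedge_eq_ιMulti]
  exact (ιMulti k n (M := ℕ →₀ k)).map_eq_zero_of_eq _ (by simp only [hij]) hne

theorem sort_prod_eq_wedge {n : ℕ} (s : Finset ℕ) (hs : s.card = n) :
    ((s.sort (· ≤ ·)).map fun i => ι k (Finsupp.single i (1 : k))).prod
      = wedge k (s.orderEmbOfFin hs) := by
  rw [wedge, ← Finset.listMap_orderEmbOfFin_finRange s hs, List.map_map, ← List.ofFn_eq_map]
  rfl

theorem exists_wedge_eq_zsmul_sort_prod {n : ℕ} (v : Fin n → ℕ) :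
    ∃ ε : ℤ, wedge k v =
      ε • (((Finset.univ.image v).sort (· ≤ ·)).map
        fun i => ι k (Finsupp.single i (1 : k))).prod := by
  by_cases hv : Function.Injective v
  · have hs : (Finset.univ.image v).card = n := by
      rw [Finset.card_image_of_injective _ hv, Finset.card_univ, Fintype.card_fin]
    obtain ⟨σ, hσ⟩ := Equiv.Perm.exists_eq_comp_of_image_eq (u := v)
      ((Finset.univ.image v).orderEmbOfFin hs).injective (by simp)
    refine ⟨Equiv.Perm.sign σ, ?_⟩
    rw [sort_prod_eq_wedge _ hs, ← Units.smul_def, ← wedge_comp_perm, ← hσ]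
  · exact ⟨0, by rw [wedge_eq_zero_of_not_injective hv, zero_smul]⟩

end Wedge

section GradedTensor

variable {k : Type*} [Field k]

theorem zsmul_gtmul (c : ℤ) (A B : ExteriorAlgebra k (ℕ →₀ k)) :
    ((c • A) ᵍ⊗ₜ[k] B : LamTensor k) = c • (A ᵍ⊗ₜ[k] B : LamTensor k) := by
  rw [GradedTensorProduct.tmul, GradedTensorProduct.tmul, ← TensorProduct.smul_tmul', map_zsmul]

theorem gtmul_zsmul (c : ℤ) (A B : ExteriorAlgebra k (ℕ →₀ k)) :
    (A ᵍ⊗ₜ[k] (c • B) : LamTensor k) = c • (A ᵍ⊗ₜ[k] B : LamTensor k) := by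
  rw [GradedTensorProduct.tmul, GradedTensorProduct.tmul, TensorProduct.tmul_smul, map_zsmul]

theorem ι_single_mem_exteriorPower_one (i : ℕ) :
    ι k (Finsupp.single i (1 : k)) ∈ ⋀[k]^1 (ℕ →₀ k) := by
  simpa only [pow_one] using LinearMap.mem_range_self _ _

theorem etaXi_mul_gtmul {m : ℕ} (i j : ℕ) {A : ExteriorAlgebra k (ℕ →₀ k)}
    (hA : A ∈ ⋀[k]^m (ℕ →₀ k)) (B : ExteriorAlgebra k (ℕ →₀ k)) :
    etaXi k i j * (A ᵍ⊗ₜ[k] B : LamTensor k) =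
      (-1 : ℤ) ^ m • ((ι k (Finsupp.single i 1) * A) ᵍ⊗ₜ[k] (ι k (Finsupp.single j 1) * B)) := by
  have := GradedTensorProduct.tmul_coe_mul_coe_tmul (R := k)
    (fun m : ℕ => ⋀[k]^m (ℕ →₀ k)) (fun m : ℕ => ⋀[k]^m (ℕ →₀ k))
    (ι k (Finsupp.single i 1)) ⟨_, ι_single_mem_exteriorPower_one j⟩ ⟨A, hA⟩ B
  rwa [one_mul, Units.smul_def, Units.val_pow_eq_pow_val, Units.val_neg, Units.val_one] at this

theorem etaXi_commute (i j i' j' : ℕ) : Commute (etaXi k i j) (etaXi k i' j') := by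
  have hswap : ∀ i i' : ℕ, ι k (Finsupp.single i (1 : k)) * ι k (Finsupp.single i' 1) =
      (-1 : ℤ) • (ι k (Finsupp.single i' 1) * ι k (Finsupp.single i 1)) := fun i i' => by
    rw [neg_one_zsmul]
    exact eq_neg_of_add_eq_zero_left (ι_add_mul_swap _ _)
  calc etaXi k i j * etaXi k i' j'
      = (-1 : ℤ) ^ 1 • ((ι k (Finsupp.single i 1) * ι k (Finsupp.single i' 1)) ᵍ⊗ₜ[k]
          (ι k (Finsupp.single j 1) * ι k (Finsupp.single j' 1))) :=
        etaXi_mul_gtmul i j (ι_single_mem_exteriorPower_one i') _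
    _ = (-1 : ℤ) ^ 1 • ((ι k (Finsupp.single i' 1) * ι k (Finsupp.single i 1)) ᵍ⊗ₜ[k]
          (ι k (Finsupp.single j' 1) * ι k (Finsupp.single j 1))) := by
        rw [hswap i, hswap j, zsmul_gtmul, gtmul_zsmul, smul_smul, smul_smul]
        norm_num
    _ = etaXi k i' j' * etaXi k i j :=
        (etaXi_mul_gtmul i' j' (ι_single_mem_exteriorPower_one i) _).symm

end GradedTensor

section EtaXiProd

variable {k : Type*} [Field k]

variable (k) in
noncomputable def etaXiProd {n : ℕ} (a b : Fin n → ℕ) : LamTensor k :=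
  (List.ofFn fun i => etaXi k (a i) (b i)).prod

theorem wedge_succ {n : ℕ} (v : Fin (n + 1) → ℕ) :
    wedge k v = ι k (Finsupp.single (v 0) 1) * wedge k fun i => v i.succ := by
  rw [wedge, List.ofFn_succ, List.prod_cons, wedge]

theorem etaXiProd_eq_zsmul_wedge_gtmul_wedge {n : ℕ} (a b : Fin n → ℕ) :
    etaXiProd k a b = (-1 : ℤ) ^ n.choose 2 • (wedge k a ᵍ⊗ₜ[k] wedge k b : LamTensor k) := by
  induction n with
  | zero => exact (one_smul ℤ _).symm
  | succ n ih =>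
    rw [etaXiProd, List.ofFn_succ, List.prod_cons, ← etaXiProd, ih, mul_smul_comm,
      etaXi_mul_gtmul _ _ (wedge_mem_exteriorPower _), ← wedge_succ, ← wedge_succ, smul_smul,
      ← pow_add, Nat.choose_succ_succ', Nat.choose_one_right, add_comm]

theorem etaXiProd_comp_perm {n : ℕ} (a b : Fin n → ℕ) (σ : Equiv.Perm (Fin n)) :
    etaXiProd k (a ∘ σ) (b ∘ σ) = etaXiProd k a b :=
  (σ.ofFn_comp_perm fun i => etaXi k (a i) (b i)).prod_eq' <|
    List.pairwise_ofFn.mpr fun _ _ _ => etaXi_commute _ _ _ _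

theorem exists_etaXiProd_eq_zsmul_basisMon {n : ℕ} (a b : Fin n → ℕ) :
    ∃ ε : ℤ, etaXiProd k a b = ε • basisMon k (Finset.univ.image a) (Finset.univ.image b) := by
  obtain ⟨εa, ha⟩ := exists_wedge_eq_zsmul_sort_prod (k := k) a
  obtain ⟨εb, hb⟩ := exists_wedge_eq_zsmul_sort_prod (k := k) b
  refine ⟨(-1) ^ n.choose 2 * εa * εb, ?_⟩
  rw [etaXiProd_eq_zsmul_wedge_gtmul_wedge, ha, hb, zsmul_gtmul, gtmul_zsmul, smul_smul,
    smul_smul, basisMon]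

end EtaXiProd


theorem map_prod_X_eq_sum_etaXiProd {k : Type*} [Field k]
    {φ : MvPolynomial ℕ k →ₐ[k] LamTensor k}
    (hφ : ∀ j : ℕ, φ (X j) = ∑ i ∈ Finset.range (j + 1), (Nat.choose j i) • etaXi k i (j - i))
    {n : ℕ} (h : Fin n → ℕ) :
    φ (∏ i, X (h i)) = ∑ a ∈ Fintype.piFinset fun i => Finset.range (h i + 1),
      (∏ i, (h i).choose (a i)) • etaXiProd k a fun i => h i - a i := by
  rw [← List.prod_ofFn, map_list_prod, List.map_ofFn, Function.comp_def]
  simp only [hφ, List.prod_ofFn_sum, List.prod_ofFn_nsmul]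
  rfl


section FairMonomial

variable {k : Type*} [Field k] {ℓ : ℕ} {h : Fin (ℓ + 1) → ℕ}

theorem etaXiProd_eq_of_image_eq (hmono : Monotone h) (hfair : ℓ ≤ h 0)
    {a : Fin (ℓ + 1) → ℕ} (ha : ∀ i, a i ≤ h i)
    (hη : Finset.univ.image a = Finset.univ.image fun i : Fin (ℓ + 1) => h i - (ℓ - i))
    (hξ : Finset.univ.image (fun i => h i - a i) = Finset.range (ℓ + 1)) :
    etaXiProd k a (fun i => h i - a i) =
      etaXiProd k (fun i : Fin (ℓ + 1) => h i - (ℓ - i)) fun i => ℓ - i := by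
  have hfair' : ∀ i, ℓ ≤ h i := fun i => hfair.trans (hmono (Fin.zero_le i))
  have hinjη : Function.Injective fun i : Fin (ℓ + 1) => h i - (ℓ - i) :=
    StrictMono.injective fun i j hij => by
      have := hmono hij.le
      have := hfair' i
      have : (i : ℕ) < j := hij
      omega
  have hinjξ : Function.Injective fun i : Fin (ℓ + 1) => ℓ - (i : ℕ) := fun i j hij => by
    have := i.isLt
    have := j.isLt
    exact Fin.ext (by simp only at hij; omega)
  obtain ⟨π, hπ⟩ := Equiv.Perm.exists_eq_comp_of_image_eq hinjη hη
  obtain ⟨τ, hτ⟩ := Equiv.Perm.exists_eq_comp_of_image_eq hinjξ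
    (hξ.trans (Fin.image_univ_sub_val ℓ).symm)
  have hτπ : τ = π := Equiv.Perm.eq_of_comp_add_val_eq hmono fun i => by
    have hπi := congrFun hπ i
    have hτi := congrFun hτ i
    simp only [Function.comp_apply] at hπi hτi
    have := ha i
    have := hfair' (π i)
    have := (π i).isLt
    have := (τ i).isLt
    omega
  rw [hτ, hτπ, hπ, etaXiProd_comp_perm]

end FairMonomial

theorem coeff_BP_in_phi_P_general (k : Type*) [Field k]
    (φ : MvPolynomial ℕ k →ₐ[k] LamTensor k)
    (hφ : ∀ j : ℕ, φ (X j) =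
      ∑ i ∈ Finset.range (j + 1), (Nat.choose j i) • etaXi k i (j - i))
    (ℓ : ℕ) (h : Fin (ℓ + 1) → ℕ) (hmono : Monotone h) (hfair : ℓ ≤ h 0) :
    ∃ c : ℤ, c ≠ 0 ∧
      φ (∏ i, X (h i)) - c •
          ((List.ofFn fun i : Fin (ℓ + 1) =>
              ExteriorAlgebra.ι k (Finsupp.single (h i - (ℓ - i.val)) (1 : k))).prod
            ᵍ⊗ₜ[k]
           (List.ofFn fun i : Fin (ℓ + 1) =>
              ExteriorAlgebra.ι k (Finsupp.single (ℓ - i.val) (1 : k))).prod)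
        ∈ Submodule.span k
            {y : LamTensor k | ∃ S T : Finset ℕ,
              (S, T) ≠ (Finset.image (fun i : Fin (ℓ + 1) => h i - (ℓ - i.val)) Finset.univ,
                        Finset.range (ℓ + 1)) ∧
              y = basisMon k S T} := by
  classical
  set a₀ : Fin (ℓ + 1) → ℕ := fun i => h i - (ℓ - i)
  set s := Fintype.piFinset fun i : Fin (ℓ + 1) => Finset.range (h i + 1)
  set Q : (Fin (ℓ + 1) → ℕ) → Prop := fun a =>
    (Finset.univ.image a, Finset.univ.image fun i => h i - a i) =
      (Finset.univ.image a₀, Finset.range (ℓ + 1))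
  set N : (Fin (ℓ + 1) → ℕ) → ℕ := fun a => ∏ i, (h i).choose (a i)
  have ha₀ : a₀ ∈ s.filter Q := by
    have hξ : (fun i => h i - a₀ i) = fun i : Fin (ℓ + 1) => ℓ - (i : ℕ) := funext fun i => by
      have := hfair.trans (hmono (Fin.zero_le i))
      show h i - (h i - (ℓ - i)) = ℓ - i
      omega
    simp only [s, Q, Finset.mem_filter, Fintype.mem_piFinset, Finset.mem_range, hξ,
      Fin.image_univ_sub_val]
    exact ⟨fun i => Nat.lt_succ_of_le (Nat.sub_le _ _), trivial⟩
  refine ⟨(-1) ^ (ℓ + 1).choose 2 * ∑ a ∈ s.filter Q, (N a : ℤ), ?_, ?_⟩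
  · refine mul_ne_zero (pow_ne_zero _ (by norm_num)) (Finset.sum_pos' (fun _ _ => by positivity)
      ⟨a₀, ha₀, ?_⟩).ne'
    exact_mod_cast Finset.prod_pos fun i _ => Nat.choose_pos (Nat.sub_le _ _)
  · rw [map_prod_X_eq_sum_etaXiProd hφ, ← Finset.sum_filter_add_sum_filter_not s Q]
    have htarget : ∑ a ∈ s.filter Q, N a • etaXiProd k a (fun i => h i - a i) =
        ∑ a ∈ s.filter Q, N a • etaXiProd k a₀ fun i => ℓ - (i : ℕ) := by
      refine Finset.sum_congr rfl fun a ha => ?_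
      simp only [s, Q, Finset.mem_filter, Fintype.mem_piFinset, Finset.mem_range,
        Prod.mk.injEq] at ha
      rw [etaXiProd_eq_of_image_eq hmono hfair (fun i => Nat.le_of_lt_succ (ha.1 i)) ha.2.1 ha.2.2]
    rw [htarget, ← Finset.sum_smul, etaXiProd_eq_zsmul_wedge_gtmul_wedge, ← natCast_zsmul, smul_smul,
      Nat.cast_sum, mul_comm]
    convert Submodule.sum_mem _ fun a ha => ?_ using 1
    · exact add_sub_cancel_left _ _
    obtain ⟨ε, hε⟩ := exists_etaXiProd_eq_zsmul_basisMon (k := k) a fun i => h i - a i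
    rw [hε]
    refine nsmul_mem (zsmul_mem (Submodule.subset_span ?_) ε) _
    exact ⟨_, _, (Finset.mem_filter.mp ha).2, rfl⟩

/-- For a fair monomial `P = x^{(h_0)}⋯x^{(h_ℓ)}` with `ℓ ≤ h_0 ≤ … ≤ h_ℓ`, the
exterior monomial
`B(P) = (η^{(h_0−ℓ)} ∧ η^{(h_1−(ℓ−1))} ∧ … ∧ η^{(h_ℓ)}) ⊗ (ξ^{(ℓ)} ∧ … ∧ ξ' ∧ ξ)`
appears with a nonzero integer coefficient in `φ(P)`, where `φ` is the
differential homomorphism with `φ(x) = η ⊗ ξ`, i.e.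
`φ(x^{(j)}) = ∑_{i=0}^{j} C(j,i)·η^{(i)} ⊗ ξ^{(j-i)}`. "Appears" means that
`φ(P) − c·B(P)` lies in the span of the basis monomials other than `B(P)`. -/
theorem coeff_BP_in_phi_P (k : Type*) [Field k] [CharZero k]
    (φ : MvPolynomial ℕ k →ₐ[k] LamTensor k)
    (hφ : ∀ j : ℕ, φ (X j) =
      ∑ i ∈ Finset.range (j + 1), (Nat.choose j i) • etaXi k i (j - i))
    (ℓ : ℕ) (h : Fin (ℓ + 1) → ℕ) (hmono : Monotone h) (hfair : ℓ ≤ h 0) :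
    ∃ c : ℤ, c ≠ 0 ∧
      φ (∏ i, X (h i)) - c •
          ((List.ofFn fun i : Fin (ℓ + 1) =>
              ExteriorAlgebra.ι k (Finsupp.single (h i - (ℓ - i.val)) (1 : k))).prod
            ᵍ⊗ₜ[k]
           (List.ofFn fun i : Fin (ℓ + 1) =>
              ExteriorAlgebra.ι k (Finsupp.single (ℓ - i.val) (1 : k))).prod)
        ∈ Submodule.span k
            {y : LamTensor k | ∃ S T : Finset ℕ,
              (S, T) ≠ (Finset.image (fun i : Fin (ℓ + 1) => h i - (ℓ - i.val)) Finset.univ,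
                        Finset.range (ℓ + 1)) ∧
              y = basisMon k S T} :=
  coeff_BP_in_phi_P_general k φ hφ ℓ h hmono hfair
end
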